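/- With U and ξ(a,b) as above (a > b, a+5b > 0), one has U(a, b, -(a+b)/4) < 0, and consequently ξ(a,b) > -(a+b)/4. -/
import Mathlib


def Ucubic (u1 u2 ξ : ℝ) : ℝ :=
  (8 * (u2 - ξ)^2 + 8 * (u2 - ξ) * (u1 - u2) + 3 * (u1 - u2)^2) * (u1 + u2 + 4 * ξ)
    - 8 * (u2 - ξ) * (2 * (u2 - ξ)^2 + 3 * (u2 - ξ) * (u1 - u2) + (u1 - u2)^2)

lemma Ucubic_neg (a b : ℝ) (hab : a > b) (h5 : a + 5 * b > 0) (ξ : ℝ)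
    (hξ : ξ ≤ -(a + b)/4) : Ucubic a b ξ < 0 := by
  unfold Ucubic
  have hv : b - ξ ≥ (a + 5 * b) / 4 := by linarith
  have hv0 : b - ξ > 0 := by linarith
  have hd : a - b > 0 := by linarith
  have h1 : a + b + 4 * ξ ≤ 0 := by linarith
  have hq : 8 * (b - ξ)^2 + 8 * (b - ξ) * (a - b) + 3 * (a - b)^2 > 0 := by nlinarith
  have h2 : 2 * (b - ξ)^2 + 3 * (b - ξ) * (a - b) + (a - b)^2 > 0 := by nlinarith
  nlinarith [mul_nonpos_of_nonneg_of_nonpos hq.le h1, mul_pos hv0 h2]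

/-- U(a,b,-(a+b)/4) < 0, and consequently any root ξ of U(a,b,·)
satisfies ξ > -(a + b)/4. -/
theorem U_at_minus (a b : ℝ) (hab : a > b) (h5 : a + 5 * b > 0) :
    Ucubic a b (-(a + b)/4) < 0 ∧
    ∀ ξ : ℝ, Ucubic a b ξ = 0 → ξ > -(a + b)/4 := by
  refine ⟨Ucubic_neg a b hab h5 _ le_rfl, fun ξ h => ?_⟩
  by_contra hle
  exact absurd h (Ucubic_neg a b hab h5 ξ (not_lt.1 hle)).ne
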